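/- arXiv:2601.04850 — 2 statements merged into one kernel-verified Lean document; each statement's English description precedes it below -/
import Mathlib

section
/- Let m ≥ 1, l ∈ ℕ, n ≥ 1, ν ∈ (0,1), and suppose 0 < p_k < 1 for all l ≤ k ≤ l+n−1. Then ∑_{k=l}^{l+n−1} ∫_k^{k+1} (ν^t·(n + l − k))^m · P_k · p_k^{t−k} · log(1/p_k) dt = ∑_{k=l}^{l+n−1} (n + l − k)^m · ν^{m·k} · P_k · log(1/p_k) · (p_k·ν^m − 1) / log(ν^m·p_k). (Since ⌊T_x⌋ = k on [k, k+1), this is the m-th moment of the present value ν^{T_x}·(n + l − ⌊T_x⌋) of a yearly decreasing insured amount, restricted to {l ≤ T_x < l+n}, under the constant force of mortality assumption.) -/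
open Real Finset

/-!
Under the constant-force assumption the integrand on `[k, k+1)` is
`(n + l - k)^m P_k log(1/p_k) · ν^{m t} p_k^{t-k}`, and
`ν^{m t} p_k^{t-k} = ν^{m k} (ν^m p_k)^{t-k}`, so each summand is the integral of an exponential
`b^{t-k}` with base `b = ν^m p_k ∈ (0, 1)` over a unit interval, namely `(b - 1) / log b`.
-/

theorem Real.integral_const_rpow {b : ℝ} (hb : 0 < b) (hb1 : b ≠ 1) (a c : ℝ) :
    ∫ t in a..c, b ^ t = (b ^ c - b ^ a) / Real.log b := by
  have hlog : Real.log b ≠ 0 := Real.log_ne_zero_of_pos_of_ne_one hb hb1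
  simp only [Real.rpow_def_of_pos hb]
  rw [intervalIntegral.integral_comp_mul_left (fun x => Real.exp x) hlog, integral_exp,
    smul_eq_mul]
  field_simp

theorem Real.integral_const_rpow_sub_self {b : ℝ} (hb : 0 < b) (hb1 : b ≠ 1) (a : ℝ) :
    ∫ t in a..a + 1, b ^ (t - a) = (b - 1) / Real.log b := by
  rw [intervalIntegral.integral_comp_sub_right (fun t => b ^ t), sub_self, add_sub_cancel_left,
    Real.integral_const_rpow hb hb1, Real.rpow_one, Real.rpow_zero]

theorem Real.rpow_pow_mul_rpow_sub {ν q : ℝ} (hν : 0 < ν) (hq : 0 < q) (m : ℕ) (s t : ℝ) :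
    (ν ^ t) ^ m * q ^ (t - s) = ν ^ ((m : ℝ) * s) * (ν ^ (m : ℝ) * q) ^ (t - s) := by
  rw [Real.mul_rpow (Real.rpow_nonneg hν.le _) hq.le, ← Real.rpow_natCast,
    ← Real.rpow_mul hν.le, ← Real.rpow_mul hν.le, ← mul_assoc, ← Real.rpow_add hν]
  ring_nf

theorem integral_discounted_constant_force_term {ν q : ℝ} (hν : 0 < ν) (hq : 0 < q)
    (m : ℕ) (hb1 : ν ^ (m : ℝ) * q ≠ 1) (s c P L : ℝ) :
    ∫ t in s..s + 1, (ν ^ t * c) ^ m * (P * q ^ (t - s) * L)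
      = c ^ m * ν ^ ((m : ℝ) * s) * P * L * (q * ν ^ (m : ℝ) - 1) /
          Real.log (ν ^ (m : ℝ) * q) := by
  have hb : 0 < ν ^ (m : ℝ) * q := mul_pos (Real.rpow_pos_of_pos hν _) hq
  have hintegrand : ∀ t : ℝ, (ν ^ t * c) ^ m * (P * q ^ (t - s) * L)
      = c ^ m * ν ^ ((m : ℝ) * s) * P * L * (ν ^ (m : ℝ) * q) ^ (t - s) := by
    intro t
    calc (ν ^ t * c) ^ m * (P * q ^ (t - s) * L)
        = c ^ m * P * L * ((ν ^ t) ^ m * q ^ (t - s)) := by ring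
      _ = _ := by rw [Real.rpow_pow_mul_rpow_sub hν hq]; ring
  rw [intervalIntegral.integral_congr fun t _ => hintegrand t, intervalIntegral.integral_const_mul,
    Real.integral_const_rpow_sub_self hb hb1]
  ring

theorem moment_yearly_decreasing_insurance_general
    (p : ℕ → ℝ) (ν : ℝ) (hν : ν ∈ Set.Ioo (0 : ℝ) 1)
    (m l n : ℕ)
    (hp : ∀ k, l ≤ k → k < l + n → 0 < p k ∧ p k < 1) :
    ∑ k ∈ Finset.Ico l (l + n),
      ∫ t in (k : ℝ)..((k : ℝ) + 1),
        (ν ^ t * ((n : ℝ) + (l : ℝ) - (k : ℝ))) ^ m *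
          ((∏ i ∈ Finset.range k, p i) * p k ^ (t - (k : ℝ)) * Real.log (1 / p k))
    = ∑ k ∈ Finset.Ico l (l + n),
        ((n : ℝ) + (l : ℝ) - (k : ℝ)) ^ m * ν ^ ((m : ℝ) * (k : ℝ)) *
          (∏ i ∈ Finset.range k, p i) * Real.log (1 / p k) *
          (p k * ν ^ (m : ℝ) - 1) / Real.log (ν ^ (m : ℝ) * p k) := by
  obtain ⟨hν0, hν1⟩ := hν
  refine Finset.sum_congr rfl fun k hk => ?_
  obtain ⟨hpk0, hpk1⟩ := hp k (Finset.mem_Ico.mp hk).1 (Finset.mem_Ico.mp hk).2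
  have hνm : ν ^ (m : ℝ) ≤ 1 := Real.rpow_le_one hν0.le hν1.le (Nat.cast_nonneg m)
  have hb1 : ν ^ (m : ℝ) * p k < 1 := by nlinarith [Real.rpow_pos_of_pos hν0 (m : ℝ)]
  exact integral_discounted_constant_force_term hν0 hpk0 m hb1.ne _ _ _ _

/-- m-th moment of the present value ν^{T_x}·(n+l−⌊T_x⌋) of a yearly
decreasing insured amount, restricted to {l ≤ T_x < l+n}, under the constant force
of mortality assumption. -/
theorem moment_yearly_decreasing_insurance
    (p : ℕ → ℝ) (ν : ℝ) (hν : ν ∈ Set.Ioo (0 : ℝ) 1)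
    (m l n : ℕ) (hm : 1 ≤ m) (hn : 1 ≤ n)
    (hp : ∀ k, l ≤ k → k < l + n → 0 < p k ∧ p k < 1) :
    ∑ k ∈ Finset.Ico l (l + n),
      ∫ t in (k : ℝ)..((k : ℝ) + 1),
        (ν ^ t * ((n : ℝ) + (l : ℝ) - (k : ℝ))) ^ m *
          ((∏ i ∈ Finset.range k, p i) * p k ^ (t - (k : ℝ)) * Real.log (1 / p k))
    = ∑ k ∈ Finset.Ico l (l + n),
        ((n : ℝ) + (l : ℝ) - (k : ℝ)) ^ m * ν ^ ((m : ℝ) * (k : ℝ)) *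
          (∏ i ∈ Finset.range k, p i) * Real.log (1 / p k) *
          (p k * ν ^ (m : ℝ) - 1) / Real.log (ν ^ (m : ℝ) * p k) :=
  moment_yearly_decreasing_insurance_general p ν hν m l n hp
end

section
/- Let m ∈ ℕ and k ∈ ℕ. Then the limit as u → 0⁺ of (Γ(m+1, k·u) − Γ(m+1, (k+1)·u)) / u^{m+1} equals ((k+1)^{m+1} − k^{m+1}) / (m+1), where Γ is the upper incomplete gamma function. -/
/-!
Since `Γ(m+1, x) - Γ(m+1, y) = ∫_x^y t^m e^{-t} dt`, the substitution `t = s u` turns the quotient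
into `∫_k^{k+1} s^m e^{-s u} ds`. This is continuous in `u` (also at `u = 0`, where the quotient
itself is `0 / 0`), and its value at `u = 0` is `∫_k^{k+1} s^m ds`.
-/

open Real MeasureTheory Filter

/-- The upper incomplete gamma function Γ(a, x) = ∫_x^∞ t^{a−1} e^{−t} dt. -/
noncomputable def upperGamma (a x : ℝ) : ℝ :=
  ∫ t in Set.Ioi x, t ^ (a - 1) * Real.exp (-t)

lemma integrableOn_rpow_mul_exp_neg_Ioi {a x : ℝ} (ha : 0 < a) (hx : 0 ≤ x) :
    IntegrableOn (fun t : ℝ => t ^ (a - 1) * exp (-t)) (Set.Ioi x) :=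
  ((GammaIntegral_convergent ha).mono_set (Set.Ioi_subset_Ioi hx)).congr_fun
    (fun _ _ => mul_comm _ _) measurableSet_Ioi

lemma upperGamma_sub_upperGamma {a x y : ℝ} (ha : 0 < a) (hx : 0 ≤ x) (hxy : x ≤ y) :
    upperGamma a x - upperGamma a y = ∫ t in x..y, t ^ (a - 1) * exp (-t) :=
  intervalIntegral.integral_Ioi_sub_Ioi (integrableOn_rpow_mul_exp_neg_Ioi ha hx) hxy

lemma integral_pow_mul_exp_neg_mul_right (m : ℕ) (a b u : ℝ) :
    ∫ t in a * u..b * u, t ^ m * exp (-t) =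
      u ^ (m + 1) * ∫ s in a..b, s ^ m * exp (-(s * u)) := by
  rw [← intervalIntegral.smul_integral_comp_mul_right, smul_eq_mul,
    ← intervalIntegral.integral_const_mul, ← intervalIntegral.integral_const_mul]
  congr 1
  ext s
  ring

lemma continuous_integral_pow_mul_exp_neg_mul (m : ℕ) (a b : ℝ) :
    Continuous fun u : ℝ => ∫ s in a..b, s ^ m * exp (-(s * u)) :=
  intervalIntegral.continuous_parametric_intervalIntegral_of_continuous' (by fun_prop) a b

/-- the limit of (Γ(m+1, k·u) − Γ(m+1, (k+1)·u)) / u^{m+1} as u → 0⁺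
equals ((k+1)^{m+1} − k^{m+1}) / (m+1). -/
theorem upperGamma_diff_div_pow_tendsto
    (m k : ℕ) :
    Filter.Tendsto
      (fun u : ℝ =>
        (upperGamma ((m : ℝ) + 1) ((k : ℝ) * u) -
          upperGamma ((m : ℝ) + 1) (((k : ℝ) + 1) * u)) / u ^ (m + 1))
      (nhdsWithin 0 (Set.Ioi 0))
      (nhds ((((k : ℝ) + 1) ^ (m + 1) - (k : ℝ) ^ (m + 1)) / ((m : ℝ) + 1))) := by
  have hG := (continuous_integral_pow_mul_exp_neg_mul m k (k + 1)).continuousWithinAt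
    (s := Set.Ioi 0) (x := 0)
  have hG0 : ∫ s in (k : ℝ)..k + 1, s ^ m * exp (-(s * 0)) =
      (((k : ℝ) + 1) ^ (m + 1) - (k : ℝ) ^ (m + 1)) / ((m : ℝ) + 1) := by
    simp [integral_pow]
  rw [ContinuousWithinAt, hG0] at hG
  refine hG.congr' (eventually_nhdsWithin_of_forall fun u (hu : 0 < u) => ?_)
  have hrpow (t : ℝ) : t ^ ((m : ℝ) + 1 - 1) = t ^ m := by
    rw [add_sub_cancel_right, rpow_natCast]
  dsimp only
  rw [upperGamma_sub_upperGamma (by positivity) (by positivity) (by gcongr; linarith)]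
  simp only [hrpow]
  rw [integral_pow_mul_exp_neg_mul_right, mul_div_cancel_left₀ _ (by positivity)]
end
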